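/- arXiv:math/9911197 — 3 statements merged into one kernel-verified Lean document; each statement's English description precedes it below -/
import Mathlib

section
/- Let w, u : R^3 -> R be smooth functions of (x,y,z), and let omega be a smooth 1-form on R^4 = R_t x R^3 (with w, u pulled back to R^4) such that d(omega) = w_x dy ∧ dz + w_y dz ∧ dx + (w e^u)_z dx ∧ dy. Then the 2-form Omega_J = - dz ∧ omega + e^u w dx ∧ dy on R^4 is closed if and only if (e^u w)_z = 0 everywhere. -/
noncomputable section

/-- Points of `ℝ³`, with coordinates `(x, y, z) = (q.1, q.2.1, q.2.2)`. -/
abbrev V3 : Type := ℝ × ℝ × ℝ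

/-- Points of `ℝ⁴ = ℝ_t × ℝ³`, with coordinates
`(x, y, z, t) = (p.1, p.2.1, p.2.2.1, p.2.2.2)`. -/
abbrev V4 : Type := ℝ × ℝ × ℝ × ℝ

/-- Projection `ℝ⁴ → ℝ³`, forgetting the `t`-coordinate. -/
def pr (p : V4) : V3 := (p.1, p.2.1, p.2.2.1)

/-- Partial derivative in the `x`-direction on `ℝ³`. -/
def px (f : V3 → ℝ) (q : V3) : ℝ := fderiv ℝ f q (1, 0, 0)

/-- Partial derivative in the `y`-direction on `ℝ³`. -/
def py (f : V3 → ℝ) (q : V3) : ℝ := fderiv ℝ f q (0, 1, 0)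

/-- Partial derivative in the `z`-direction on `ℝ³`. -/
def pz (f : V3 → ℝ) (q : V3) : ℝ := fderiv ℝ f q (0, 0, 1)

/-- The exterior derivative of the 1-form `ω` on `ℝ⁴`, evaluated at `p` on the
(constant) vectors `u, v`. -/
def dOm (ω : V4 → V4 →L[ℝ] ℝ) (p u v : V4) : ℝ :=
  fderiv ℝ (fun q => ω q v) p u - fderiv ℝ (fun q => ω q u) p v

/-- The 2-form `Ω_J = -dz ∧ ω + e^u w dx ∧ dy` on `ℝ⁴`, evaluated at `p` on the
(constant) vectors `u, v`. -/
def OmJ (w U : V3 → ℝ) (ω : V4 → V4 →L[ℝ] ℝ) (p u v : V4) : ℝ :=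
  -(u.2.2.1 * ω p v - v.2.2.1 * ω p u)
    + Real.exp (U (pr p)) * w (pr p) * (u.1 * v.2.1 - u.2.1 * v.1)

/-- Let `w, u : ℝ³ → ℝ` be smooth and let `ω` be a smooth 1-form on `ℝ⁴` with
`dω = w_x dy∧dz + w_y dz∧dx + (w e^u)_z dx∧dy`. Then the 2-form
`Ω_J = -dz ∧ ω + e^u w dx ∧ dy` is closed if and only if `(e^u w)_z = 0`
everywhere. -/
theorem stmt_8 (w U : V3 → ℝ) (hw : ContDiff ℝ (⊤ : ℕ∞) w) (hU : ContDiff ℝ (⊤ : ℕ∞) U)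
    (ω : V4 → V4 →L[ℝ] ℝ) (hω : ContDiff ℝ (⊤ : ℕ∞) ω)
    (hdω : ∀ p u v : V4,
      dOm ω p u v =
        px w (pr p) * (u.2.1 * v.2.2.1 - u.2.2.1 * v.2.1)
          + py w (pr p) * (u.2.2.1 * v.1 - u.1 * v.2.2.1)
          + pz (fun q => w q * Real.exp (U q)) (pr p) * (u.1 * v.2.1 - u.2.1 * v.1)) :
    (∀ p u v r : V4,
      fderiv ℝ (fun q => OmJ w U ω q v r) p u
        - fderiv ℝ (fun q => OmJ w U ω q u r) p v
        + fderiv ℝ (fun q => OmJ w U ω q u v) p r = 0) ↔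
    (∀ q : V3, pz (fun r => Real.exp (U r) * w r) q = 0) := by
  set F : V3 → ℝ := fun q => Real.exp (U q) * w q with hFdef
  have hF : ContDiff ℝ (⊤ : ℕ∞) F := (hU.exp).mul hw
  -- rewrite hdω to use F
  have hwF : (fun q : V3 => w q * Real.exp (U q)) = F := funext fun q => mul_comm _ _
  have hdω' : ∀ p u v : V4,
      fderiv ℝ (fun q => ω q v) p u - fderiv ℝ (fun q => ω q u) p v =
        px w (pr p) * (u.2.1 * v.2.2.1 - u.2.2.1 * v.2.1)
          + py w (pr p) * (u.2.2.1 * v.1 - u.1 * v.2.2.1)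
          + pz F (pr p) * (u.1 * v.2.1 - u.2.1 * v.1) := by
    intro p u v
    have := hdω p u v
    rw [dOm, hwF] at this
    exact this
  -- the projection as a continuous linear map
  let prL : V4 →L[ℝ] V3 :=
    (ContinuousLinearMap.fst ℝ ℝ (ℝ×ℝ×ℝ)).prod
      ((((ContinuousLinearMap.fst ℝ ℝ (ℝ×ℝ))).comp (ContinuousLinearMap.snd ℝ ℝ (ℝ×ℝ×ℝ))).prod
        ((ContinuousLinearMap.fst ℝ ℝ ℝ).comp ((ContinuousLinearMap.snd ℝ ℝ (ℝ×ℝ)).comp (ContinuousLinearMap.snd ℝ ℝ (ℝ×ℝ×ℝ)))))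
  have hdir : ∀ (L : V3 →L[ℝ] ℝ) (v : V3),
      L v = v.1 * L (1,0,0) + v.2.1 * L (0,1,0) + v.2.2 * L (0,0,1) := by
    intro L v
    have hv : v = v.1 • ((1,0,0):V3) + v.2.1 • ((0,1,0):V3) + v.2.2 • ((0,0,1):V3) := by
      simp [Prod.ext_iff]
    conv_lhs => rw [hv]
    rw [map_add, map_add, map_smul, map_smul, map_smul, smul_eq_mul, smul_eq_mul, smul_eq_mul]
  have hD3 : ∀ (p u : V4), fderiv ℝ (fun q : V4 => F (pr q)) p u =
      u.1 * px F (pr p) + u.2.1 * py F (pr p) + u.2.2.1 * pz F (pr p) := by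
    intro p u
    have hcomp : fderiv ℝ (F ∘ ⇑prL) p = (fderiv ℝ F (prL p)).comp (fderiv ℝ (⇑prL) p) :=
      fderiv_comp p (hF.differentiable (by simp) (prL p)) prL.differentiableAt
    rw [prL.fderiv] at hcomp
    have : fderiv ℝ (fun q : V4 => F (pr q)) p = (fderiv ℝ F (prL p)).comp prL := hcomp
    rw [this]
    show fderiv ℝ F (prL p) (prL u) = _
    rw [hdir (fderiv ℝ F (prL p)) (prL u)]
    rfl
  -- differentiability facts
  have hωd : ∀ (a : V4) (p : V4), DifferentiableAt ℝ (fun q => ω q a) p := by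
    intro a p
    exact (hω.differentiable (by simp) p).clm_apply (differentiableAt_const a)
  have h3 : ∀ p : V4, DifferentiableAt ℝ (fun q : V4 => F (pr q)) p := by
    intro p
    exact ((hF.differentiable (by simp)) (prL p)).comp p prL.differentiableAt
  -- main derivative computation
  have key : ∀ (p u v r : V4),
      fderiv ℝ (fun q => OmJ w U ω q v r) p u =
        -(v.2.2.1 * fderiv ℝ (fun q => ω q r) p u - r.2.2.1 * fderiv ℝ (fun q => ω q v) p u)
        + (u.1 * px F (pr p) + u.2.1 * py F (pr p) + u.2.2.1 * pz F (pr p))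
            * (v.1 * r.2.1 - v.2.1 * r.1) := by
    intro p u v r
    have H : HasFDerivAt (fun q => OmJ w U ω q v r)
        (-(v.2.2.1 • fderiv ℝ (fun q => ω q r) p - r.2.2.1 • fderiv ℝ (fun q => ω q v) p)
          + (v.1 * r.2.1 - v.2.1 * r.1) • fderiv ℝ (fun q : V4 => F (pr q)) p) p := by
      exact ((((hωd r p).hasFDerivAt.const_mul v.2.2.1).sub
        (((hωd v p).hasFDerivAt.const_mul r.2.2.1))).neg).add
        ((h3 p).hasFDerivAt.mul_const _)
    rw [H.fderiv]
    simp only [ContinuousLinearMap.add_apply, ContinuousLinearMap.neg_apply,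
      ContinuousLinearMap.sub_apply, ContinuousLinearMap.smul_apply, smul_eq_mul]
    rw [hD3 p u]
    ring
  -- expansion of the full exterior derivative
  have expand : ∀ (p u v r : V4),
      fderiv ℝ (fun q => OmJ w U ω q v r) p u
        - fderiv ℝ (fun q => OmJ w U ω q u r) p v
        + fderiv ℝ (fun q => OmJ w U ω q u v) p r
      = 2 * pz F (pr p) *
          (u.2.2.1 * (v.1 * r.2.1 - v.2.1 * r.1)
            - v.2.2.1 * (u.1 * r.2.1 - u.2.1 * r.1)
            + r.2.2.1 * (u.1 * v.2.1 - u.2.1 * v.1)) := by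
    intro p u v r
    rw [key p u v r, key p v u r, key p r u v]
    linear_combination u.2.2.1 * (hdω' p v r) - v.2.2.1 * (hdω' p u r) + r.2.2.1 * (hdω' p u v)
  constructor
  · intro h q
    have hq : pr (q.1, q.2.1, q.2.2, (0:ℝ)) = q := rfl
    have := h (q.1, q.2.1, q.2.2, 0) (0,0,1,0) (1,0,0,0) (0,1,0,0)
    rw [expand] at this
    rw [hq] at this
    norm_num at this
    linarith [this]
  · intro h p u v r
    rw [expand, h (pr p)]
    ring

end
end

section
/- Let V be a 4-dimensional real inner product space with orthogonal complex structure J, and let R be an algebraic curvature operator (symmetric endomorphism of Lambda^2 V satisfying the first Bianchi identity). If R satisfies the second Gray condition R_{XYZW} - R_{(JX)(JY)ZW} = R_{(JX)Y(JZ)W} + R_{(JX)YZ(JW)} for all X,Y,Z,W, then R satisfies the third Gray condition R_{XYZW} = R_{(JX)(JY)(JZ)(JW)} for all X,Y,Z,W. -/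
open RealInnerProductSpace

/-! The defect `D X Y Z W = R X Y Z W - R (J X) (J Y) (J Z) (J W)` is invariant under
exchanging the pairs. Adding the second Gray condition at `(X, Y, Z, W)` and at
`(X, Y, J Z, J W)` cancels its right-hand sides and rewrites `D` as
`R (J X) (J Y) Z W - R X Y (J Z) (J W)`, which changes sign under pair exchange.
Hence `D = -D`, so `D = 0`. -/

section GrayCondition

variable {𝕜 M : Type*} [Field 𝕜] [AddCommGroup M] [Module 𝕜 M]
  {J : M →ₗ[𝕜] M} {R : M →ₗ[𝕜] M →ₗ[𝕜] M →ₗ[𝕜] M →ₗ[𝕜] 𝕜}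

theorem gray₃_defect_eq_of_gray₂ (hJ2 : ∀ x, J (J x) = -x)
    (hG2 : ∀ X Y Z W, R X Y Z W - R (J X) (J Y) Z W
      = R (J X) Y (J Z) W + R (J X) Y Z (J W)) (X Y Z W : M) :
    R X Y Z W - R (J X) (J Y) (J Z) (J W) = R (J X) (J Y) Z W - R X Y (J Z) (J W) := by
  have hJ := hG2 X Y (J Z) (J W)
  simp only [hJ2, map_neg, LinearMap.neg_apply] at hJ
  linear_combination hG2 X Y Z W + hJ

theorem gray₃_of_gray₂ [CharZero 𝕜] (hJ2 : ∀ x, J (J x) = -x)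
    (hRs : ∀ X Y Z W, R X Y Z W = R Z W X Y)
    (hG2 : ∀ X Y Z W, R X Y Z W - R (J X) (J Y) Z W
      = R (J X) Y (J Z) W + R (J X) Y Z (J W)) (X Y Z W : M) :
    R X Y Z W = R (J X) (J Y) (J Z) (J W) := by
  have h := gray₃_defect_eq_of_gray₂ hJ2 hG2
  have hswap : R X Y Z W - R (J X) (J Y) (J Z) (J W)
      = -(R X Y Z W - R (J X) (J Y) (J Z) (J W)) :=
    calc R X Y Z W - R (J X) (J Y) (J Z) (J W)
        = R Z W X Y - R (J Z) (J W) (J X) (J Y) := by rw [hRs X Y, hRs (J X) (J Y)]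
      _ = R (J Z) (J W) X Y - R Z W (J X) (J Y) := h Z W X Y
      _ = R X Y (J Z) (J W) - R (J X) (J Y) Z W := by rw [hRs (J Z), hRs Z W]
      _ = -(R X Y Z W - R (J X) (J Y) (J Z) (J W)) := by rw [h X Y Z W]; ring
  linear_combination hswap / 2

end GrayCondition

theorem stmt_11_general {V : Type*} [NormedAddCommGroup V] [InnerProductSpace ℝ V]
    (J : V →ₗ[ℝ] V) (hJ2 : ∀ x, J (J x) = -x)
    (R : V →ₗ[ℝ] V →ₗ[ℝ] V →ₗ[ℝ] V →ₗ[ℝ] ℝ)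
    (hRs : ∀ X Y Z W, R X Y Z W = R Z W X Y)
    (hG2 : ∀ X Y Z W, R X Y Z W - R (J X) (J Y) Z W
      = R (J X) Y (J Z) W + R (J X) Y Z (J W)) :
    ∀ X Y Z W, R X Y Z W = R (J X) (J Y) (J Z) (J W) :=
  gray₃_of_gray₂ hJ2 hRs hG2

/-- Let `V` be a 4-dimensional real inner product space, `R` an algebraic curvature
operator on `Λ²V` (encoded as the multilinear 4-tensor `R X Y Z W = ⟨R(X∧Y), Z∧W⟩`,
antisymmetric in the first and last pairs, pair-exchange symmetric — this is the
symmetry of `R` as an endomorphism of `Λ²V` — and satisfying the first Bianchi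
identity), and `J` an orthogonal complex structure on `V`. If `R` satisfies the
second Gray condition then it satisfies the third Gray condition. -/
theorem stmt_11 {V : Type*} [NormedAddCommGroup V] [InnerProductSpace ℝ V]
    [FiniteDimensional ℝ V] (hdim : Module.finrank ℝ V = 4)
    (J : V →ₗ[ℝ] V) (hJ2 : ∀ x, J (J x) = -x) (hJo : ∀ x y, ⟪J x, J y⟫ = ⟪x, y⟫)
    (R : V →ₗ[ℝ] V →ₗ[ℝ] V →ₗ[ℝ] V →ₗ[ℝ] ℝ)
    (hR1 : ∀ X Y Z W, R X Y Z W = -R Y X Z W)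
    (hR2 : ∀ X Y Z W, R X Y Z W = -R X Y W Z)
    (hRs : ∀ X Y Z W, R X Y Z W = R Z W X Y)
    (hBianchi : ∀ X Y Z W, R X Y Z W + R Y Z X W + R Z X Y W = 0)
    (hG2 : ∀ X Y Z W, R X Y Z W - R (J X) (J Y) Z W
      = R (J X) Y (J Z) W + R (J X) Y Z (J W)) :
    ∀ X Y Z W, R X Y Z W = R (J X) (J Y) (J Z) (J W) :=
  stmt_11_general J hJ2 R hRs hG2
end

section
/- Let V be an oriented 4-dimensional real inner product space with orthogonal complex structure J inducing the orientation, fundamental form Omega, and let phi be a J-anti-invariant self-dual 2-form with <phi, phi> = 2 (inner product on 2-forms normalized so that |Omega|^2 = 2). Define Jphi by (Jphi)(X,Y) = -phi(JX, Y). Then {Omega/√2, phi/√2, Jphi/√2} is an orthonormal basis of Lambda^+, and Jphi is again J-anti-invariant and self-dual. -/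
/-!
Identify `Λ⁺` with `ℝ³` through the basis `e⁰¹ + e²³, e⁰² + e³¹, e⁰³ + e¹²`; then `formInner`
is twice the dot product. An antisymmetric orthogonal `4 × 4` matrix with positive Pfaffian has
vanishing anti-self-dual part, so `Ω` is self-dual and corresponds to a unit vector `a`, while `φ`
corresponds to a unit vector `u`. The quaternion relations show that `Jφ` corresponds to
`a × u`, and that `φ(JX, X) = -⟨a, u⟩ |X|²`, which vanishes by `J`-anti-invariance. Hence
`a, u, a × u` is an orthonormal frame of `ℝ³`.
-/

open RealInnerProductSpace

noncomputable section

/-- The oriented Euclidean 4-space. -/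
abbrev E : Type := EuclideanSpace ℝ (Fin 4)

/-- The standard (oriented, orthonormal) basis of `E`. -/
def e (i : Fin 4) : E := EuclideanSpace.single i 1

/-- `φ : E → E → ℝ` is a 2-form: bilinear and alternating. -/
def IsTwoForm (φ : E → E → ℝ) : Prop :=
  (∀ x y z : E, φ (x + y) z = φ x z + φ y z) ∧
  (∀ (c : ℝ) (x y : E), φ (c • x) y = c * φ x y) ∧
  (∀ x y : E, φ x y = -φ y x)

/-- A 2-form is self-dual (`*φ = φ` for the standard orientation) iff
`φ₁₂ = φ₃₄`, `φ₁₃ = φ₄₂`, `φ₁₄ = φ₂₃`. -/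
def SelfDual (φ : E → E → ℝ) : Prop :=
  φ (e 0) (e 1) = φ (e 2) (e 3) ∧ φ (e 0) (e 2) = φ (e 3) (e 1) ∧
    φ (e 0) (e 3) = φ (e 1) (e 2)

/-- The inner product on 2-forms, normalized so that `|Ω|² = 2`. -/
def formInner (φ ψ : E → E → ℝ) : ℝ :=
  (1 / 2) * ∑ i : Fin 4, ∑ j : Fin 4, φ (e i) (e j) * ψ (e i) (e j)

open Matrix

theorem eq_sum_dotProduct_smul_of_orthonormal {R n : Type*} [CommRing R] [Fintype n]
    [DecidableEq n] {v : n → n → R} (hv : ∀ i j, v i ⬝ᵥ v j = if i = j then 1 else 0)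
    (w : n → R) : w = ∑ i, (v i ⬝ᵥ w) • v i := by
  have hM : of v * (of v)ᵀ = 1 := by
    ext i j; exact hv i j
  calc w = (of v)ᵀ *ᵥ (of v *ᵥ w) := by rw [mulVec_mulVec, mul_eq_one_comm.mp hM, one_mulVec]
    _ = ∑ i, (v i ⬝ᵥ w) • v i := by rw [mulVec_transpose, vecMul_eq_sum]; rfl

theorem dotProduct_cross_frame {a u : Fin 3 → ℝ} (ha : a ⬝ᵥ a = 1) (hu : u ⬝ᵥ u = 1)
    (hau : a ⬝ᵥ u = 0) (i j : Fin 3) :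
    ![a, u, a ⨯₃ u] i ⬝ᵥ ![a, u, a ⨯₃ u] j = if i = j then 1 else 0 := by
  have hua : u ⬝ᵥ a = 0 := by rwa [dotProduct_comm]
  have hn : a ⨯₃ u ⬝ᵥ a ⨯₃ u = 1 := by rw [cross_dot_cross, ha, hu, hau, hua]; ring
  have hna : a ⨯₃ u ⬝ᵥ a = 0 := by rw [dotProduct_comm, dot_self_cross]
  have hnu : a ⨯₃ u ⬝ᵥ u = 0 := by rw [dotProduct_comm, dot_cross_self]
  fin_cases i <;> fin_cases j <;> simp [ha, hu, hau, hua, hn, hna, hnu]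

lemma e_apply (i j : Fin 4) : e i j = if j = i then 1 else 0 := by
  simp [e]

lemma inner_e_right (x : E) (k : Fin 4) : ⟪x, e k⟫ = x k := by
  simp [e, EuclideanSpace.inner_single_right]

lemma basisFun_eq_e : ⇑(EuclideanSpace.basisFun (Fin 4) ℝ) = e := by
  ext1 i; simp [e]

namespace IsTwoForm

variable {φ ψ : E → E → ℝ}

lemma add_right (hφ : IsTwoForm φ) (x y z : E) : φ x (y + z) = φ x y + φ x z := by
  rw [hφ.2.2, hφ.1, hφ.2.2 y, hφ.2.2 z]; ring

lemma smul_right (hφ : IsTwoForm φ) (c : ℝ) (x y : E) : φ x (c • y) = c * φ x y := by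
  rw [hφ.2.2, hφ.2.1, hφ.2.2 y]; ring

lemma apply_self (hφ : IsTwoForm φ) (x : E) : φ x x = 0 := by
  linarith [hφ.2.2 x x]

def toBilin (hφ : IsTwoForm φ) : E →ₗ[ℝ] E →ₗ[ℝ] ℝ :=
  LinearMap.mk₂ ℝ φ hφ.1 hφ.2.1 hφ.add_right hφ.smul_right

@[simp] lemma toBilin_apply (hφ : IsTwoForm φ) (x y : E) : hφ.toBilin x y = φ x y := rfl

theorem ext (hφ : IsTwoForm φ) (hψ : IsTwoForm ψ) (h : ∀ i j, φ (e i) (e j) = ψ (e i) (e j)) :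
    φ = ψ := by
  have := LinearMap.ext_basis (EuclideanSpace.basisFun (Fin 4) ℝ).toBasis
    (EuclideanSpace.basisFun (Fin 4) ℝ).toBasis (B := hφ.toBilin) (B' := hψ.toBilin)
    (by simpa only [OrthonormalBasis.coe_toBasis, basisFun_eq_e, toBilin_apply] using h)
  funext x y
  exact LinearMap.congr_fun₂ this x y

end IsTwoForm

/-- Coordinates on `Λ⁺ ≅ ℝ³`: the form `v₀ (e⁰¹ + e²³) + v₁ (e⁰² + e³¹) + v₂ (e⁰³ + e¹²)`. -/
def selfDualForm (v : Fin 3 → ℝ) (x y : E) : ℝ :=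
  v 0 * (x 0 * y 1 - x 1 * y 0 + x 2 * y 3 - x 3 * y 2) +
  v 1 * (x 0 * y 2 - x 2 * y 0 + x 3 * y 1 - x 1 * y 3) +
  v 2 * (x 0 * y 3 - x 3 * y 0 + x 1 * y 2 - x 2 * y 1)

lemma isTwoForm_selfDualForm (v : Fin 3 → ℝ) : IsTwoForm (selfDualForm v) := by
  refine ⟨fun x y z => ?_, fun c x y => ?_, fun x y => ?_⟩ <;> simp only [selfDualForm,
    PiLp.add_apply, PiLp.smul_apply, smul_eq_mul] <;> ring

lemma selfDualForm_add (v w : Fin 3 → ℝ) (x y : E) :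
    selfDualForm (v + w) x y = selfDualForm v x y + selfDualForm w x y := by
  simp only [selfDualForm, Pi.add_apply]; ring

lemma selfDualForm_smul (c : ℝ) (v : Fin 3 → ℝ) (x y : E) :
    selfDualForm (c • v) x y = c * selfDualForm v x y := by
  simp only [selfDualForm, Pi.smul_apply, smul_eq_mul]; ring

lemma formInner_selfDualForm (v w : Fin 3 → ℝ) :
    formInner (selfDualForm v) (selfDualForm w) = 2 * (v ⬝ᵥ w) := by
  simp only [formInner, Fin.sum_univ_four, selfDualForm, e_apply, dotProduct, Fin.sum_univ_three,
    Fin.isValue, ↓reduceIte, one_ne_zero, zero_ne_one, Fin.reduceEq, one_div, mul_ite, mul_one,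
    mul_zero, zero_sub, sub_zero, sub_self, add_zero, zero_add, mul_neg, neg_mul, neg_zero, neg_neg]
  ring

lemma selfDual_selfDualForm (v : Fin 3 → ℝ) : SelfDual (selfDualForm v) := by
  refine ⟨?_, ?_, ?_⟩ <;> simp [selfDualForm, e_apply]

theorem IsTwoForm.exists_eq_selfDualForm {ψ : E → E → ℝ} (hψ : IsTwoForm ψ) (hsd : SelfDual ψ) :
    ∃ v, ψ = selfDualForm v := by
  obtain ⟨h01, h02, h03⟩ := hsd
  refine ⟨![ψ (e 0) (e 1), ψ (e 0) (e 2), ψ (e 0) (e 3)],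
    hψ.ext (isTwoForm_selfDualForm _) fun i j => ?_⟩
  have hji := hψ.2.2 (e j) (e i)
  fin_cases i <;> fin_cases j <;>
    simp only [Fin.zero_eta, Fin.mk_one, Fin.reduceFinMk, Fin.isValue, hψ.apply_self, selfDualForm,
      cons_val_zero, cons_val_one, cons_val, e_apply, ↓reduceIte, one_ne_zero, zero_ne_one,
      Fin.reduceEq, mul_zero, mul_one, mul_neg, sub_self, sub_zero, zero_sub, add_zero, zero_add,
      neg_zero] at hji ⊢ <;>
    linarith

-- The quaternion relation `I_u I_a = -⟨a, u⟩ - I_{a × u}`, where `⟪I_a x, y⟫ = selfDualForm a x y`.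
theorem selfDualForm_apply_of_inner_eq {a : Fin 3 → ℝ} {f : E → E}
    (hf : ∀ x y, ⟪f x, y⟫ = selfDualForm a x y) (u : Fin 3 → ℝ) (x y : E) :
    selfDualForm u (f x) y = -(a ⬝ᵥ u) * ⟪x, y⟫ - selfDualForm (a ⨯₃ u) x y := by
  have hz : ∀ k, f x k = selfDualForm a x (e k) := fun k => by rw [← inner_e_right, hf]
  simp only [selfDualForm, hz, e_apply, dotProduct, Fin.sum_univ_three, cross_apply,
    PiLp.inner_apply, RCLike.inner_apply, Real.ringHom_apply, Fin.sum_univ_four, Fin.isValue,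
    cons_val_zero, cons_val_one, cons_val, ↓reduceIte, one_ne_zero, zero_ne_one, Fin.reduceEq,
    mul_zero, mul_one, sub_self, sub_zero, zero_sub, add_zero, zero_add, mul_neg]
  ring

theorem antisymm_orthogonal_selfDual_of_pfaffian_pos {Ω : Fin 4 → Fin 4 → ℝ}
    (hanti : ∀ i j, Ω i j = -Ω j i) (horth : ∀ i j, ∑ k, Ω i k * Ω j k = if i = j then 1 else 0)
    (hpf : 0 < Ω 0 1 * Ω 2 3 - Ω 0 2 * Ω 1 3 + Ω 0 3 * Ω 1 2) :
    Ω 0 1 = Ω 2 3 ∧ Ω 0 2 = Ω 3 1 ∧ Ω 0 3 = Ω 1 2 := by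
  have hdiag : ∀ i, Ω i i = 0 := fun i => by linarith [hanti i i]
  have h00 := horth 0 0; have h11 := horth 1 1; have h22 := horth 2 2; have h33 := horth 3 3
  have h01 := horth 0 1; have h02 := horth 0 2; have h03 := horth 0 3
  have h12 := horth 1 2; have h13 := horth 1 3; have h23 := horth 2 3
  simp only [Fin.sum_univ_four, hdiag, hanti 1 0, hanti 2 0, hanti 3 0, hanti 2 1, hanti 3 1,
    hanti 3 2, Fin.reduceEq, if_true, if_false] at h00 h11 h22 h33 h01 h02 h03 h12 h13 h23
  set a := Ω 0 1; set b := Ω 0 2; set c := Ω 0 3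
  set p := Ω 1 2; set q := Ω 1 3; set r := Ω 2 3
  -- `Pf(Ω)² = det Ω = 1`, so `Pf(Ω) = 1`; then the anti-self-dual part `(r - a, q + b, p - c)`
  -- of `Ω` has squared norm `|Ω|²/2 - 2 Pf(Ω) = 0`.
  have hnorm : a^2 + b^2 + c^2 + p^2 + q^2 + r^2 = 2 := by
    linear_combination (h00 + h11 + h22 + h33) / 2
  have hr2 : r^2 = a^2 := by
    linear_combination (a*q - b*r)*h03 + (c*r + a*p)*h02 - r^2*h00 + (a^2/2)*(h11+h22+h33-h00)
  have hq2 : q^2 = b^2 := by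
    linear_combination (b*r - a*q)*h03 + (c*q - b*p)*h01 - q^2*h00 + (b^2/2)*(h11+h22+h33-h00)
  have hp2 : p^2 = c^2 := by
    linear_combination (-a*p - c*r)*h02 + (b*p - c*q)*h01 - p^2*h00 + (c^2/2)*(h11+h22+h33-h00)
  have hpf_sq : (a*r - b*q + c*p - 1) * (a*r - b*q + c*p + 1) = 0 := by
    linear_combination a^2*hr2 + b^2*hq2 + c^2*hp2 - 2*a*b*h12 - 2*a*c*h13 - 2*b*c*h23 +
      (a*a+b*b+c*c+1)*h00
  have hpf_one : a*r - b*q + c*p = 1 := by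
    rcases mul_eq_zero.mp hpf_sq with h | h <;> linarith
  have hasd : (r-a)^2 + (q+b)^2 + (p-c)^2 = 0 := by
    linear_combination hnorm - 2*hpf_one
  obtain ⟨hra, hqb, hpc⟩ : r - a = 0 ∧ q + b = 0 ∧ p - c = 0 := by
    refine ⟨?_, ?_, ?_⟩ <;> refine (pow_eq_zero_iff two_ne_zero).mp ?_ <;>
      linarith [sq_nonneg (r-a), sq_nonneg (q+b), sq_nonneg (p-c)]
  exact ⟨by linarith, by rw [hanti 3 1]; linarith, by linarith⟩

section ComplexStructure

variable {J : E →ₗ[ℝ] E}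

lemma inner_map_left_eq_neg_swap (hJ2 : ∀ x, J (J x) = -x)
    (hJo : ∀ x y : E, ⟪J x, J y⟫ = ⟪x, y⟫) (x y : E) : ⟪J x, y⟫ = -⟪J y, x⟫ := by
  have h := hJo (J y) x
  rw [hJ2, inner_neg_left, real_inner_comm] at h
  linarith

lemma isTwoForm_inner_map (hJ2 : ∀ x, J (J x) = -x) (hJo : ∀ x y : E, ⟪J x, J y⟫ = ⟪x, y⟫) :
    IsTwoForm (fun x y => ⟪J x, y⟫) :=
  ⟨fun x y z => by simp [inner_add_left], fun c x y => by simp [real_inner_smul_left],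
    inner_map_left_eq_neg_swap hJ2 hJo⟩

lemma sum_inner_map_mul_inner_map (hJo : ∀ x y : E, ⟪J x, J y⟫ = ⟪x, y⟫) (i j : Fin 4) :
    ∑ k, ⟪J (e i), e k⟫ * ⟪J (e j), e k⟫ = if i = j then 1 else 0 := by
  have := (EuclideanSpace.basisFun (Fin 4) ℝ).sum_inner_mul_inner (J (e i)) (J (e j))
  rw [basisFun_eq_e, hJo] at this
  simp_rw [real_inner_comm (J (e j))] at this
  rw [this]
  simp [e, EuclideanSpace.inner_single_right, eq_comm]

lemma selfDual_inner_map (hJ2 : ∀ x, J (J x) = -x) (hJo : ∀ x y : E, ⟪J x, J y⟫ = ⟪x, y⟫)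
    (horient : 0 < ⟪J (e 0), e 1⟫ * ⟪J (e 2), e 3⟫ - ⟪J (e 0), e 2⟫ * ⟪J (e 1), e 3⟫
      + ⟪J (e 0), e 3⟫ * ⟪J (e 1), e 2⟫) :
    SelfDual (fun x y => ⟪J x, y⟫) :=
  antisymm_orthogonal_selfDual_of_pfaffian_pos (fun _ _ => inner_map_left_eq_neg_swap hJ2 hJo _ _)
    (sum_inner_map_mul_inner_map hJo) horient

lemma formInner_inner_map (hJo : ∀ x y : E, ⟪J x, J y⟫ = ⟪x, y⟫) :
    formInner (fun x y => ⟪J x, y⟫) (fun x y => ⟪J x, y⟫) = 2 := by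
  simp only [formInner, sum_inner_map_mul_inner_map hJo]
  norm_num

lemma IsTwoForm.apply_map_self {φ : E → E → ℝ} (hφ : IsTwoForm φ) (hJ2 : ∀ x, J (J x) = -x)
    (hanti : ∀ x y, φ (J x) (J y) = -φ x y) (x : E) : φ (J x) x = 0 := by
  have h := hanti x (J x)
  rw [hJ2, ← neg_one_smul ℝ x, hφ.smul_right, hφ.2.2 x] at h
  linarith

lemma dotProduct_eq_zero_of_antiInvariant {a u : Fin 3 → ℝ} (hJ2 : ∀ x, J (J x) = -x)
    (hΩ : ∀ x y, ⟪J x, y⟫ = selfDualForm a x y)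
    (hanti : ∀ x y, selfDualForm u (J x) (J y) = -selfDualForm u x y) : a ⬝ᵥ u = 0 := by
  have h := selfDualForm_apply_of_inner_eq hΩ u (e 0) (e 0)
  rw [(isTwoForm_selfDualForm u).apply_map_self hJ2 hanti,
    (isTwoForm_selfDualForm _).apply_self, inner_e_right, e_apply] at h
  simpa using h

end ComplexStructure

/-- Let `J` be an orthogonal complex structure inducing the orientation, with
fundamental form `Ω(X,Y) = ⟨JX,Y⟩`, and let `φ` be a `J`-anti-invariant self-dual
2-form with `⟨φ,φ⟩ = 2`. Define `(Jφ)(X,Y) = -φ(JX,Y)`. Then `Jφ` is again a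
`J`-anti-invariant self-dual 2-form and `{Ω/√2, φ/√2, Jφ/√2}` is an orthonormal
basis of `Λ⁺`. -/
theorem stmt_13 (J : E →ₗ[ℝ] E) (hJ2 : ∀ x, J (J x) = -x)
    (hJo : ∀ x y : E, ⟪J x, J y⟫ = ⟪x, y⟫)
    (horient : 0 < ⟪J (e 0), e 1⟫ * ⟪J (e 2), e 3⟫ - ⟪J (e 0), e 2⟫ * ⟪J (e 1), e 3⟫
      + ⟪J (e 0), e 3⟫ * ⟪J (e 1), e 2⟫)
    (φ : E → E → ℝ) (hφ : IsTwoForm φ) (hsd : SelfDual φ)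
    (hanti : ∀ x y, φ (J x) (J y) = -φ x y)
    (hnorm : formInner φ φ = 2) :
    -- Jφ is a J-anti-invariant self-dual 2-form
    (IsTwoForm (fun x y => -φ (J x) y) ∧ SelfDual (fun x y => -φ (J x) y) ∧
      (∀ x y, -φ (J (J x)) (J y) = -(-φ (J x) y))) ∧
    -- orthonormality: all three have square-norm 2 and are mutually orthogonal
    (formInner (fun x y => ⟪J x, y⟫) (fun x y => ⟪J x, y⟫) = 2 ∧
      formInner (fun x y => -φ (J x) y) (fun x y => -φ (J x) y) = 2 ∧
      formInner (fun x y => ⟪J x, y⟫) φ = 0 ∧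
      formInner (fun x y => ⟪J x, y⟫) (fun x y => -φ (J x) y) = 0 ∧
      formInner φ (fun x y => -φ (J x) y) = 0) ∧
    -- they span the self-dual 2-forms
    (∀ ψ, IsTwoForm ψ → SelfDual ψ →
      ∃ c₁ c₂ c₃ : ℝ, ∀ x y,
        ψ x y = c₁ * ⟪J x, y⟫ + c₂ * φ x y + c₃ * (-φ (J x) y)) := by
  obtain ⟨a, hΩ⟩ := (isTwoForm_inner_map hJ2 hJo).exists_eq_selfDualForm
    (selfDual_inner_map hJ2 hJo horient)
  have hΩ' : ∀ x y, ⟪J x, y⟫ = selfDualForm a x y := congrFun₂ hΩ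
  obtain ⟨u, rfl⟩ := hφ.exists_eq_selfDualForm hsd
  have haa : a ⬝ᵥ a = 1 := by
    have h := formInner_inner_map hJo
    rw [hΩ, formInner_selfDualForm] at h
    linarith
  have huu : u ⬝ᵥ u = 1 := by
    rw [formInner_selfDualForm] at hnorm
    linarith
  have hau : a ⬝ᵥ u = 0 := dotProduct_eq_zero_of_antiInvariant hJ2 hΩ' hanti
  have hJφ : (fun x y => -selfDualForm u (J x) y) = selfDualForm (a ⨯₃ u) := by
    funext x y
    rw [selfDualForm_apply_of_inner_eq hΩ', hau]
    ring
  refine ⟨⟨?_, ?_, fun x y => by rw [hanti]⟩, ?_, fun ψ hψ hψsd => ?_⟩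
  · rw [hJφ]; exact isTwoForm_selfDualForm _
  · rw [hJφ]; exact selfDual_selfDualForm _
  · rw [hJφ, hΩ]
    simp only [formInner_selfDualForm, cross_dot_cross, dot_self_cross, dot_cross_self, haa, huu,
      hau, dotProduct_comm u a]
    norm_num
  · obtain ⟨w, rfl⟩ := hψ.exists_eq_selfDualForm hψsd
    refine ⟨a ⬝ᵥ w, u ⬝ᵥ w, (a ⨯₃ u) ⬝ᵥ w, fun x y => ?_⟩
    rw [hΩ', congrFun₂ hJφ x y]
    conv_lhs => rw [eq_sum_dotProduct_smul_of_orthonormal (dotProduct_cross_frame haa huu hau) w]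
    simp [Fin.sum_univ_three, selfDualForm_add, selfDualForm_smul]
end
end
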